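/- Monomorphisation is sound for a simplified polymorphic expression language: if the monomorphised program evaluates, then the polymorphic program evaluates to the corresponding value. Precisely: for an injective renaming rename from (polymorphic function name, type-argument list) pairs to monomorphic function names, and definition environments D_poly and D_mono with D_mono(rename(f, τs)) being the monomorphisation of D_poly(f) instantiated at τs, if (x ↦ monoval(rename, v)) ⊢ monoexpr(rename, e) ⇓ monoval(rename, v') under D_mono, then (x ↦ v) ⊢ e ⇓ v' under D_poly. -/

import Mathlib

/-- Type arguments are drawn from an abstract type `T`; function names are
    strings. -/
inductive Expr (T : Type)
  | var (n : ℕ)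
  | fn (f : String) (τs : List T)
  | app (e₁ e₂ : Expr T)
  | letE (e₁ e₂ : Expr T)
  | lit (n : ℕ)

/-- Values: literals and function values ⟨x. e⟩ (closures over top-level
    expressions only, de Bruijn). -/
inductive Val (T : Type)
  | lit (n : ℕ)
  | clos (e : Expr T)

/-- Definition environments: a function name applied to type arguments yields
    the (instantiated) body, if defined. -/
abbrev Defs (T : Type) := String → List T → Option (Expr T)

/-- Big-step semantics, parameterised by the definition environment. -/
inductive Eval {T : Type} (D : Defs T) : List (Val T) → Expr T → Val T → Prop
  | var : V[n]? = some v → Eval D V (.var n) v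
  | lit : Eval D V (.lit n) (.lit n)
  | fn : D f τs = some e → Eval D V (.fn f τs) (.clos e)
  | app : Eval D V e₁ (.clos e) → Eval D V e₂ v' → Eval D [v'] e v →
      Eval D V (.app e₁ e₂) v
  | letE : Eval D V e₁ v₁ → Eval D (v₁ :: V) e₂ v → Eval D V (.letE e₁ e₂) v

/-- Monomorphise an expression: replace every function reference `f[τs]` by
    the monomorphic name `rename (f, τs)` with empty type arguments. -/
def monoexpr {T : Type} (rename : String × List T → String) : Expr T → Expr T
  | .var n => .var n
  | .fn f τs => .fn (rename (f, τs)) []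
  | .app e₁ e₂ => .app (monoexpr rename e₁) (monoexpr rename e₂)
  | .letE e₁ e₂ => .letE (monoexpr rename e₁) (monoexpr rename e₂)
  | .lit n => .lit n

/-- Monomorphise a value. -/
def monoval {T : Type} (rename : String × List T → String) : Val T → Val T
  | .lit n => .lit n
  | .clos e => .clos (monoexpr rename e)

/-!
Evaluation of a monomorphised program is reflected back to the polymorphic one, by induction on
the monomorphic derivation: every function value it produces is the image of a polymorphic body,
because every monomorphic definition reached through `rename (f, τs)` is the image of the
polymorphic `f` at `τs`. Injectivity of `rename` then makes `monoval rename` injective, which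
identifies the reflected result with `v'`.
-/

section

variable {T : Type} {rename : String × List T → String}

theorem monoexpr_injective (hinj : Function.Injective rename) :
    Function.Injective (monoexpr rename) := by
  intro e₁ e₂ h
  induction e₁ generalizing e₂ with
  | fn f τs =>
    cases e₂ <;> simp only [monoexpr, reduceCtorEq, Expr.fn.injEq, and_true] at h
    obtain ⟨rfl, rfl⟩ := Prod.ext_iff.mp (hinj h)
    rfl
  | app a b iha ihb =>
    cases e₂ <;> simp only [monoexpr, reduceCtorEq, Expr.app.injEq] at h
    rw [iha h.1, ihb h.2]
  | letE a b iha ihb =>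
    cases e₂ <;> simp only [monoexpr, reduceCtorEq, Expr.letE.injEq] at h
    rw [iha h.1, ihb h.2]
  | var | lit => cases e₂ <;> simp_all [monoexpr]

theorem monoval_injective (hinj : Function.Injective rename) :
    Function.Injective (monoval rename) := by
  rintro (_ | _) (_ | _) h <;> simp_all [monoval, monoexpr_injective hinj |>.eq_iff]

theorem monoval_eq_clos {v : Val T} {e' : Expr T} :
    monoval rename v = .clos e' ↔ ∃ e, v = .clos e ∧ monoexpr rename e = e' := by
  cases v <;> simp [monoval]

/-- The induction runs over the monomorphic derivation, whose closure bodies are not subterms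
of `e`; hence the environment and expression are only constrained by equations. -/
theorem Eval.exists_of_monoexpr {Dpoly Dmono : Defs T}
    (hmono : ∀ f τs e', Dmono (rename (f, τs)) [] = some e' →
      ∃ e, Dpoly f τs = some e ∧ monoexpr rename e = e')
    {V' : List (Val T)} {e' : Expr T} {w : Val T} (h : Eval Dmono V' e' w)
    {V : List (Val T)} {e : Expr T}
    (hV : V.map (monoval rename) = V') (he : monoexpr rename e = e') :
    ∃ v, monoval rename v = w ∧ Eval Dpoly V e v := by
  induction h generalizing V e with
  | var hget =>
    cases e <;> simp only [monoexpr, reduceCtorEq, Expr.var.injEq] at he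
    subst he hV
    rw [List.getElem?_map, Option.map_eq_some_iff] at hget
    obtain ⟨v, hv, rfl⟩ := hget
    exact ⟨v, rfl, .var hv⟩
  | lit =>
    cases e <;> simp only [monoexpr, reduceCtorEq, Expr.lit.injEq] at he
    subst he
    exact ⟨.lit _, rfl, .lit⟩
  | fn hD =>
    cases e <;> simp only [monoexpr, reduceCtorEq, Expr.fn.injEq] at he
    obtain ⟨rfl, rfl⟩ := he
    obtain ⟨body, hbody, rfl⟩ := hmono _ _ _ hD
    exact ⟨.clos body, rfl, .fn hbody⟩
  | app _ _ _ ih₁ ih₂ ih₃ =>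
    cases e <;> simp only [monoexpr, reduceCtorEq, Expr.app.injEq] at he
    obtain ⟨c₁, hc₁, hev₁⟩ := ih₁ hV he.1
    obtain ⟨c₂, rfl, hev₂⟩ := ih₂ hV he.2
    obtain ⟨body, rfl, hbody⟩ := monoval_eq_clos.mp hc₁
    obtain ⟨v, hv, hev₃⟩ := ih₃ (V := [c₂]) rfl hbody
    exact ⟨v, hv, .app hev₁ hev₂ hev₃⟩
  | letE _ _ ih₁ ih₂ =>
    cases e <;> simp only [monoexpr, reduceCtorEq, Expr.letE.injEq] at he
    obtain ⟨c₁, rfl, hev₁⟩ := ih₁ hV he.1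
    obtain ⟨v, hv, hev₂⟩ := ih₂ (V := c₁ :: V) (by rw [List.map_cons, hV]) he.2
    exact ⟨v, hv, .letE hev₁ hev₂⟩

end

theorem monomorphisation_general {T : Type} (rename : String × List T → String)
    (Dpoly Dmono : Defs T)
    (hinj : Function.Injective rename)
    (hdom : ∀ g τs' e', Dmono g τs' = some e' →
      ∃ f τs e, g = rename (f, τs) ∧ τs' = [] ∧ Dpoly f τs = some e ∧
        e' = monoexpr rename e)
    (e : Expr T) (v v' : Val T)
    (h : Eval Dmono [monoval rename v] (monoexpr rename e) (monoval rename v')) :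
    Eval Dpoly [v] e v' := by
  have hmono : ∀ f τs e', Dmono (rename (f, τs)) [] = some e' →
      ∃ e, Dpoly f τs = some e ∧ monoexpr rename e = e' := by
    intro f τs e' hD
    obtain ⟨f₀, τs₀, e, hname, -, hpoly, rfl⟩ := hdom _ _ _ hD
    obtain ⟨rfl, rfl⟩ := Prod.ext_iff.mp (hinj hname)
    exact ⟨e, hpoly, rfl⟩
  obtain ⟨w, hw, hev⟩ := h.exists_of_monoexpr hmono (V := [v]) rfl rfl
  rwa [← monoval_injective hinj hw]

/-- Monomorphisation is sound: if the monomorphised program evaluates under the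
    monomorphic definitions, then the polymorphic program evaluates to the
    corresponding value under the polymorphic definitions. -/
theorem monomorphisation {T : Type} (rename : String × List T → String)
    (Dpoly Dmono : Defs T)
    (hinj : Function.Injective rename)
    (hdefs : ∀ f τs e, Dpoly f τs = some e →
      Dmono (rename (f, τs)) [] = some (monoexpr rename e))
    (hdom : ∀ g τs' e', Dmono g τs' = some e' →
      ∃ f τs e, g = rename (f, τs) ∧ τs' = [] ∧ Dpoly f τs = some e ∧
        e' = monoexpr rename e)
    (e : Expr T) (v v' : Val T)
    (h : Eval Dmono [monoval rename v] (monoexpr rename e) (monoval rename v')) :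
    Eval Dpoly [v] e v' :=
  monomorphisation_general rename Dpoly Dmono hinj hdom e v v' h
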